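/- For natural numbers A ≥ 1 and N ≥ 1, the number M(A, N, M, n) of strings of length N over {0, …, A−1} with sum M whose cyclic-shift orbit has size exactly n does not depend on N in the following sense: if n | N and N | M·n, then M(A, N, M, n) = M(A, n, M·n/N, n); and summing over all admissible sums M, the total number of strings of length N whose orbit has size exactly n equals the number of strings of length n whose orbit has size exactly n, namely ∑_{k | n} μ(n/k) · A^k. -/

import Mathlib

/-- The cyclic shift operator: `(shift a) i = a (i - 1 mod N)`. -/
def shift {A N : ℕ} (a : Fin N → Fin A) : Fin N → Fin A :=
  fun i => a ⟨((i : ℕ) + (N - 1)) % N, Nat.mod_lt _ i.pos⟩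

/-- The orbit of a string under iterated cyclic shifts. -/
def orbit {A N : ℕ} (a : Fin N → Fin A) : Set (Fin N → Fin A) :=
  {b | ∃ k : ℕ, shift^[k] a = b}

/-- The order of the cycle generated by `a`: the size of its shift orbit. -/
noncomputable def orbitSize {A N : ℕ} (a : Fin N → Fin A) : ℕ :=
  (orbit a).ncard

/-- The sum of the entries of a string. -/
def strSum {A N : ℕ} (a : Fin N → Fin A) : ℕ := ∑ i, (a i : ℕ)

/-- `|S(A,N,M)|`: the number of strings of length `N` over `{0,…,A-1}` with sum `M`. -/
noncomputable def Scard (A N M : ℕ) : ℕ :=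
  Set.ncard {a : Fin N → Fin A | strSum a = M}

/-- `M(A,N,M,n)`: the number of strings of length `N` over `{0,…,A-1}` with sum `M`
whose orbit has size exactly `n`. -/
noncomputable def Mcount (A N M n : ℕ) : ℕ :=
  Set.ncard {a : Fin N → Fin A | strSum a = M ∧ orbitSize a = n}

/-- `N(A,N,M,n)`: the number of cycles (shift orbits) of size exactly `n` among strings
of length `N` over `{0,…,A-1}` with sum `M`. -/
noncomputable def Ncount (A N M n : ℕ) : ℕ :=
  Set.ncard {o : Set (Fin N → Fin A) | ∃ a, strSum a = M ∧ orbitSize a = n ∧ o = orbit a}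

/-!
The orbit size of a string is its minimal period under `shift`. For `n ∣ L`, periodic extension
from length `n` to length `L` is injective and commutes with `shift`, so it preserves minimal
periods, and its image is the set of strings fixed by `shift^[n]`. Hence the strings of length
`L` with orbit size `n` are exactly the periodic extensions of those of length `n` with orbit
size `n`, and extension multiplies the sum by `L / n`. Sorting the `A ^ d` strings of length `d`
by their orbit size `e ∣ d` gives `∑_{e ∣ d} P(e) = A ^ d` for the number `P(e)` of strings of
length `e` with orbit size `e`; Möbius inversion then gives `P(n)`.
-/

open Function

section Shift

variable {A L : ℕ}

lemma shift_iterate_apply (k : ℕ) (a : Fin L → Fin A) (i : Fin L) :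
    shift^[k] a i = a ⟨(i + k * (L - 1)) % L, Nat.mod_lt _ i.pos⟩ := by
  induction k generalizing a with
  | zero => simp [Nat.mod_eq_of_lt i.2]
  | succ k ih =>
    rw [iterate_succ_apply, ih]
    simp only [shift, Nat.mod_add_mod, Nat.add_assoc, Nat.succ_mul]

lemma isPeriodicPt_shift_length (a : Fin L → Fin A) : IsPeriodicPt shift L a := by
  funext i
  rw [shift_iterate_apply]
  congr
  simp [Nat.add_mul_mod_self_left, Nat.mod_eq_of_lt i.2]

lemma orbitSize_eq_minimalPeriod (hL : 0 < L) (a : Fin L → Fin A) :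
    orbitSize a = minimalPeriod shift a := by
  have hpos : 0 < minimalPeriod shift a := (isPeriodicPt_shift_length a).minimalPeriod_pos hL
  have horbit : orbit a = (shift^[·] a) '' Set.Iio (minimalPeriod shift a) := by
    ext b
    constructor
    · rintro ⟨k, rfl⟩
      exact ⟨k % minimalPeriod shift a, Nat.mod_lt _ hpos, iterate_mod_minimalPeriod_eq⟩
    · rintro ⟨k, -, rfl⟩
      exact ⟨k, rfl⟩
  rw [orbitSize, horbit, iterate_injOn_Iio_minimalPeriod.ncard_image,
    ← Finset.coe_Iio, Set.ncard_coe_finset, Nat.card_Iio]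

end Shift

section PeriodicExtend

variable {A L n : ℕ}

def periodicExtend (hn : 0 < n) (b : Fin n → Fin A) : Fin L → Fin A :=
  fun i => b ⟨i % n, Nat.mod_lt _ hn⟩

lemma periodicExtend_injective (hn : 0 < n) (hle : n ≤ L) :
    Injective (periodicExtend hn : (Fin n → Fin A) → Fin L → Fin A) :=
  LeftInverse.injective (g := (· ∘ Fin.castLE hle)) fun b =>
    funext fun j => by simp [periodicExtend, Nat.mod_eq_of_lt j.2]

lemma semiconj_periodicExtend_shift (hn : 0 < n) (hdvd : n ∣ L) :
    Semiconj (periodicExtend hn : (Fin n → Fin A) → Fin L → Fin A) shift shift := by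
  intro b
  funext i
  obtain ⟨m, rfl⟩ := hdvd
  obtain ⟨m, rfl⟩ : ∃ m', m = m' + 1 := Nat.exists_eq_add_one.2 (Nat.pos_of_mul_pos_left i.pos)
  simp only [periodicExtend, shift]
  congr 2
  have hL : i + (n * (m + 1) - 1) = i + (n - 1) + n * m := by
    have : n * (m + 1) = n * m + n := by ring
    omega
  rw [Nat.mod_mod_of_dvd _ (Dvd.intro _ rfl), hL, Nat.add_mul_mod_self_left, Nat.mod_add_mod]

lemma minimalPeriod_periodicExtend (hn : 0 < n) (hL : 0 < L) (hdvd : n ∣ L)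
    (b : Fin n → Fin A) :
    minimalPeriod shift (periodicExtend hn b : Fin L → Fin A) = minimalPeriod shift b :=
  minimalPeriod_eq_minimalPeriod_iff.2 fun k => by
    simp only [IsPeriodicPt, IsFixedPt,
      ← (semiconj_periodicExtend_shift hn hdvd).iterate_right k b]
    exact (periodicExtend_injective hn (Nat.le_of_dvd hL hdvd)).eq_iff

lemma periodicExtend_castLE_of_isPeriodicPt (hn : 0 < n) (hle : n ≤ L) {a : Fin L → Fin A}
    (h : IsPeriodicPt shift n a) : periodicExtend hn (a ∘ Fin.castLE hle) = a := by
  funext i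
  have hi := congrFun (h.mul_const (i / n)) i
  rw [shift_iterate_apply] at hi
  rw [← hi]
  simp only [periodicExtend, comp_apply]
  congr 1
  ext
  obtain ⟨L, rfl⟩ : ∃ L', L = L' + 1 := Nat.exists_eq_add_one.2 i.pos
  have hidx : (i : ℕ) + n * (i / n) * (L + 1 - 1) = i % n + (L + 1) * (n * (i / n)) := by
    have hdecomp := Nat.mod_add_div i n
    set r := (i : ℕ) % n
    set q := (i : ℕ) / n
    rw [Nat.add_sub_cancel, ← hdecomp]
    ring
  simp only [Fin.val_castLE]
  rw [hidx, Nat.add_mul_mod_self_left,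
    Nat.mod_eq_of_lt ((Nat.mod_lt _ hn).trans_le hle)]

lemma setOf_and_minimalPeriod_eq_image (hn : 0 < n) (hL : 0 < L) (hdvd : n ∣ L)
    (q : (Fin L → Fin A) → Prop) :
    {a : Fin L → Fin A | q a ∧ minimalPeriod shift a = n} =
      periodicExtend hn '' {b | q (periodicExtend hn b) ∧ minimalPeriod shift b = n} := by
  ext a
  constructor
  · rintro ⟨hq, hmp⟩
    have hper : IsPeriodicPt shift n a := hmp ▸ isPeriodicPt_minimalPeriod shift a
    rw [← periodicExtend_castLE_of_isPeriodicPt hn (Nat.le_of_dvd hL hdvd) hper] at hq hmp ⊢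
    rw [minimalPeriod_periodicExtend hn hL hdvd] at hmp
    exact ⟨_, ⟨hq, hmp⟩, rfl⟩
  · rintro ⟨b, ⟨hq, hmp⟩, rfl⟩
    exact ⟨hq, (minimalPeriod_periodicExtend hn hL hdvd b).trans hmp⟩

lemma ncard_setOf_and_minimalPeriod_eq (hn : 0 < n) (hL : 0 < L) (hdvd : n ∣ L)
    (q : (Fin L → Fin A) → Prop) :
    {a : Fin L → Fin A | q a ∧ minimalPeriod shift a = n}.ncard =
      {b | q (periodicExtend hn b) ∧ minimalPeriod shift b = n}.ncard := by
  rw [setOf_and_minimalPeriod_eq_image hn hL hdvd,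
    Set.ncard_image_of_injective _ (periodicExtend_injective hn (Nat.le_of_dvd hL hdvd))]

lemma ncard_setOf_minimalPeriod_eq (hn : 0 < n) (hL : 0 < L) (hdvd : n ∣ L) :
    {a : Fin L → Fin A | minimalPeriod shift a = n}.ncard =
      {b : Fin n → Fin A | minimalPeriod shift b = n}.ncard := by
  simpa using ncard_setOf_and_minimalPeriod_eq (A := A) hn hL hdvd fun _ => True

lemma strSum_periodicExtend (hn : 0 < n) (hdvd : n ∣ L) (b : Fin n → Fin A) :
    strSum (periodicExtend hn b : Fin L → Fin A) = L / n * strSum b := by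
  obtain ⟨m, rfl⟩ := hdvd
  let e : Fin m × Fin n ≃ Fin (n * m) := finProdFinEquiv.trans (finCongr (Nat.mul_comm m n))
  have he (x : Fin m × Fin n) : periodicExtend hn b (e x) = b x.2 := by
    simp [e, periodicExtend, Nat.add_mul_mod_self_left, Nat.mod_eq_of_lt x.2.2]
  rw [strSum, ← e.sum_comp, Fintype.sum_prod_type]
  simp [he, strSum, Nat.mul_div_cancel_left _ hn]

lemma strSum_periodicExtend_eq_iff (hn : 0 < n) (hL : 0 < L) (hdvd : n ∣ L) {M : ℕ}
    (hMn : L ∣ M * n) (b : Fin n → Fin A) :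
    strSum (periodicExtend hn b : Fin L → Fin A) = M ↔ strSum b = M * n / L := by
  rw [strSum_periodicExtend hn hdvd]
  obtain ⟨m, rfl⟩ := hdvd
  have hm : m ≠ 0 := by rintro rfl; simp at hL
  have hmM : m ∣ M := Nat.dvd_of_mul_dvd_mul_left hn (by rwa [Nat.mul_comm n M])
  rw [Nat.mul_div_cancel_left _ hn, Nat.mul_comm M n,
    Nat.mul_div_mul_left _ _ hn, Nat.eq_div_iff_mul_eq_left hm hmM, Nat.mul_comm, eq_comm]

end PeriodicExtend

section Counting

open ArithmeticFunction

variable {A : ℕ}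

lemma sum_divisors_ncard_minimalPeriod_eq {d : ℕ} (hd : 0 < d) :
    ∑ e ∈ d.divisors, {b : Fin e → Fin A | minimalPeriod shift b = e}.ncard = A ^ d := by
  classical
  have hmaps : Set.MapsTo (minimalPeriod shift)
      ((Finset.univ : Finset (Fin d → Fin A)) : Set (Fin d → Fin A)) d.divisors := fun b _ =>
    Nat.mem_divisors.2 ⟨(isPeriodicPt_shift_length b).minimalPeriod_dvd, hd.ne'⟩
  calc ∑ e ∈ d.divisors, {b : Fin e → Fin A | minimalPeriod shift b = e}.ncard
      = ∑ e ∈ d.divisors, {b : Fin d → Fin A | minimalPeriod shift b = e}.ncard :=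
        Finset.sum_congr rfl fun e he => (ncard_setOf_minimalPeriod_eq
          (Nat.pos_of_mem_divisors he) hd (Nat.dvd_of_mem_divisors he)).symm
    _ = (Finset.univ : Finset (Fin d → Fin A)).card := by
        simp only [Set.ncard_eq_toFinset_card', Set.toFinset_ofPred]
        exact (Finset.card_eq_sum_card_fiberwise hmaps).symm
    _ = A ^ d := by simp

lemma ncard_minimalPeriod_eq_self (n : ℕ) (hn : 0 < n) :
    ({b : Fin n → Fin A | minimalPeriod shift b = n}.ncard : ℤ) =
      ∑ k ∈ n.divisors, moebius (n / k) * (A : ℤ) ^ k := by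
  have h := (sum_eq_iff_sum_mul_moebius_eq (R := ℤ)
    (f := fun e => ({b : Fin e → Fin A | minimalPeriod shift b = e}.ncard : ℤ))
    (g := fun d => (A : ℤ) ^ d)).1
    (fun d hd => by exact_mod_cast sum_divisors_ncard_minimalPeriod_eq hd) n hn
  simp only [Int.cast_id] at h
  rw [← h, Nat.sum_divisorsAntidiagonal' (f := fun x y => moebius x * (A : ℤ) ^ y)]

end Counting

theorem stmt_18_general (A N : ℕ) (hN : 1 ≤ N) :
    (∀ M n : ℕ, n ∣ N → N ∣ M * n → Mcount A N M n = Mcount A n (M * n / N) n) ∧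
    (∀ n : ℕ, n ∣ N →
      Set.ncard {a : Fin N → Fin A | orbitSize a = n} =
        Set.ncard {b : Fin n → Fin A | orbitSize b = n} ∧
      (Set.ncard {a : Fin N → Fin A | orbitSize a = n} : ℤ) =
        ∑ k ∈ n.divisors, ArithmeticFunction.moebius (n / k) * (A : ℤ) ^ k) := by
  refine ⟨fun M n hdvd hMn => ?_, fun n hdvd => ?_⟩ <;>
    have hn : 0 < n := Nat.pos_of_dvd_of_pos hdvd hN <;>
    simp only [Mcount, orbitSize_eq_minimalPeriod hN, orbitSize_eq_minimalPeriod hn]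
  · rw [ncard_setOf_and_minimalPeriod_eq hn hN hdvd]
    simp only [strSum_periodicExtend_eq_iff hn hN hdvd hMn]
  · rw [ncard_setOf_minimalPeriod_eq hn hN hdvd]
    exact ⟨rfl, ncard_minimalPeriod_eq_self n hn⟩

/-- `M(A,N,M,n)` does not depend on `N`: if `n ∣ N` and `N ∣ M·n` then
`M(A,N,M,n) = M(A,n,M·n/N,n)`; and, summing over all admissible sums `M`, the total number
of strings of length `N` with orbit size exactly `n` equals the number of strings of
length `n` with orbit size exactly `n`, namely `∑_{k ∣ n} μ(n/k)·A^k`. -/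
theorem stmt_18 (A N : ℕ) (hA : 1 ≤ A) (hN : 1 ≤ N) :
    (∀ M n : ℕ, n ∣ N → N ∣ M * n → Mcount A N M n = Mcount A n (M * n / N) n) ∧
    (∀ n : ℕ, n ∣ N →
      Set.ncard {a : Fin N → Fin A | orbitSize a = n} =
        Set.ncard {b : Fin n → Fin A | orbitSize b = n} ∧
      (Set.ncard {a : Fin N → Fin A | orbitSize a = n} : ℤ) =
        ∑ k ∈ n.divisors, ArithmeticFunction.moebius (n / k) * (A : ℤ) ^ k) :=
  stmt_18_general A N hN
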